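/- arXiv:2105.01025 — 4 statements merged into one kernel-verified Lean document; each statement's English description precedes it below -/
import Mathlib

section
/- Let 𝖪_0, …, 𝖪_3 and 𝖠_0, …, 𝖠_3 be matrices in M_m(ℂ), define the operators 𝔡_μ = {𝖪_μ + 𝖠_μ, ·}_{e_μ} on M_m(ℂ), set 𝔉_{μν} = [𝔡_μ, 𝔡_ν] and θ = Σ_{μ,ν} η^{μν} 𝔡_μ ∘ 𝔡_ν. Then, as operators on ℂ^k ⊗ M_m(ℂ): ( Σ_μ γ^μ ⊗ 𝔡_μ )² = (1/2) Σ_{μ,ν} γ^μ γ^ν ⊗ 𝔉_{μν} + 1_k ⊗ θ. (Paper: Proposition 4.6, the flat Weitzenböck formula for Yang-Mills gauge matrix spectral triples.) -/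
/-!
Expanding the square gives `∑ γ^μ γ^ν ⊗ 𝔡_μ 𝔡_ν`. Split `𝔡_μ 𝔡_ν` into half its commutator and half
its anticommutator; swapping `μ` and `ν` moves the symmetrisation of the second part onto the gamma
matrices, where the Clifford relation `{γ^μ, γ^ν} = 2 η^{μν}` collapses it to `1 ⊗ θ`.
-/

open Matrix

noncomputable section

/-- The operator `g ⊗ T` on `ℂ^k ⊗ M_m(ℂ) ≅ (Fin k → M_m(ℂ))`. -/
def matOp {k : ℕ} {V : Type*} [AddCommGroup V] [Module ℂ V]
    (g : Matrix (Fin k) (Fin k) ℂ) (T : Module.End ℂ V) :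
    Module.End ℂ (Fin k → V) where
  toFun f i := ∑ j, g i j • T (f j)
  map_add' f h := by
    funext i
    simp [map_add, smul_add, Finset.sum_add_distrib]
  map_smul' c f := by
    funext i
    simp only [Pi.smul_apply, _root_.map_smul, RingHom.id_apply]
    rw [Finset.smul_sum]
    exact Finset.sum_congr rfl fun j _ => smul_comm _ _ _

/-- The generalized (anti-)commutator `{M, ·}_e : T ↦ M T + e T M`. -/
def brkt {m : ℕ} (M : Matrix (Fin m) (Fin m) ℂ) (e : ℂ) :
    Module.End ℂ (Matrix (Fin m) (Fin m) ℂ) :=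
  LinearMap.mulLeft ℂ M + e • LinearMap.mulRight ℂ M

section MatOp

variable {k : ℕ} {V : Type*} [AddCommGroup V] [Module ℂ V]

lemma matOp_apply (g : Matrix (Fin k) (Fin k) ℂ) (T : Module.End ℂ V)
    (f : Fin k → V) (i : Fin k) : matOp g T f i = ∑ j, g i j • T (f j) := rfl

lemma matOp_mul (g g' : Matrix (Fin k) (Fin k) ℂ) (T T' : Module.End ℂ V) :
    matOp g T * matOp g' T' = matOp (g * g') (T * T') := by
  refine LinearMap.ext fun f => funext fun i => ?_
  simp only [Module.End.mul_apply, matOp_apply, map_sum, _root_.map_smul,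
    Finset.smul_sum, smul_smul]
  rw [Finset.sum_comm]
  refine Finset.sum_congr rfl fun j _ => ?_
  rw [← Finset.sum_smul, Matrix.mul_apply]

lemma matOp_add_left (g g' : Matrix (Fin k) (Fin k) ℂ) (T : Module.End ℂ V) :
    matOp (g + g') T = matOp g T + matOp g' T := by
  refine LinearMap.ext fun f => funext fun i => ?_
  simp [matOp_apply, add_smul, Finset.sum_add_distrib]

lemma matOp_smul_left (c : ℂ) (g : Matrix (Fin k) (Fin k) ℂ) (T : Module.End ℂ V) :
    matOp (c • g) T = c • matOp g T := by
  refine LinearMap.ext fun f => funext fun i => ?_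
  simp [matOp_apply, Finset.smul_sum, smul_smul]

lemma matOp_sub_right (g : Matrix (Fin k) (Fin k) ℂ) (T T' : Module.End ℂ V) :
    matOp g (T - T') = matOp g T - matOp g T' := by
  refine LinearMap.ext fun f => funext fun i => ?_
  simp [matOp_apply, smul_sub, Finset.sum_sub_distrib]

lemma matOp_smul_right (c : ℂ) (g : Matrix (Fin k) (Fin k) ℂ) (T : Module.End ℂ V) :
    matOp g (c • T) = c • matOp g T := by
  refine LinearMap.ext fun f => funext fun i => ?_
  simp [matOp_apply, Finset.smul_sum, smul_smul, mul_comm]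

lemma matOp_sum_right {ι : Type*} (s : Finset ι) (g : Matrix (Fin k) (Fin k) ℂ)
    (T : ι → Module.End ℂ V) :
    matOp g (∑ x ∈ s, T x) = ∑ x ∈ s, matOp g (T x) := by
  refine LinearMap.ext fun f => funext fun i => ?_
  simp only [matOp_apply, LinearMap.sum_apply, Finset.sum_apply, Finset.smul_sum]
  exact Finset.sum_comm

end MatOp

section Weitzenbock

variable {k : ℕ} {V : Type*} [AddCommGroup V] [Module ℂ V] {ι : Type*} [Fintype ι]
  (γ : ι → Matrix (Fin k) (Fin k) ℂ) (d : ι → Module.End ℂ V)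

lemma sum_matOp_mul_sum_matOp :
    (∑ μ, matOp (γ μ) (d μ)) * (∑ μ, matOp (γ μ) (d μ)) =
      ∑ μ, ∑ ν, matOp (γ μ * γ ν) (d μ * d ν) := by
  simp only [Finset.sum_mul_sum, matOp_mul]

lemma sum_matOp_mul_eq_half_commutator_add_half_anticommutator :
    ∑ μ, ∑ ν, matOp (γ μ * γ ν) (d μ * d ν) =
      (1 / 2 : ℂ) • ∑ μ, ∑ ν, matOp (γ μ * γ ν) (d μ * d ν - d ν * d μ) +
        (1 / 2 : ℂ) • ∑ μ, ∑ ν, matOp (γ μ * γ ν + γ ν * γ μ) (d μ * d ν) := by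
  have swap : ∑ μ, ∑ ν, matOp (γ ν * γ μ) (d μ * d ν) =
      ∑ μ, ∑ ν, matOp (γ μ * γ ν) (d ν * d μ) := Finset.sum_comm
  simp only [matOp_sub_right, matOp_add_left, Finset.sum_sub_distrib, Finset.sum_add_distrib,
    swap]
  module

lemma sum_matOp_anticommutator_of_clifford (η : ι → ι → ℂ)
    (hCl : ∀ μ ν, γ μ * γ ν + γ ν * γ μ = (2 * η μ ν) • (1 : Matrix (Fin k) (Fin k) ℂ)) :
    ∑ μ, ∑ ν, matOp (γ μ * γ ν + γ ν * γ μ) (d μ * d ν) =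
      (2 : ℂ) • matOp 1 (∑ μ, ∑ ν, η μ ν • (d μ * d ν)) := by
  simp only [hCl, matOp_smul_left, matOp_sum_right, matOp_smul_right, Finset.smul_sum, smul_smul]

theorem sum_matOp_sq_of_clifford (η : ι → ι → ℂ)
    (hCl : ∀ μ ν, γ μ * γ ν + γ ν * γ μ = (2 * η μ ν) • (1 : Matrix (Fin k) (Fin k) ℂ)) :
    (∑ μ, matOp (γ μ) (d μ)) * (∑ μ, matOp (γ μ) (d μ)) =
      (1 / 2 : ℂ) • (∑ μ, ∑ ν, matOp (γ μ * γ ν) (d μ * d ν - d ν * d μ)) +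
        matOp 1 (∑ μ, ∑ ν, η μ ν • (d μ * d ν)) := by
  rw [sum_matOp_mul_sum_matOp, sum_matOp_mul_eq_half_commutator_add_half_anticommutator,
    sum_matOp_anticommutator_of_clifford γ d η hCl, smul_smul]
  norm_num

end Weitzenbock

theorem stmt7_general (k m : ℕ)
    (e : Fin 4 → ℂ)
    (γ : Fin 4 → Matrix (Fin k) (Fin k) ℂ)
    (hCl : ∀ μ ν, γ μ * γ ν + γ ν * γ μ =
      (2 * if μ = ν then e μ else 0) • (1 : Matrix (Fin k) (Fin k) ℂ))
    (dop : Fin 4 → Module.End ℂ (Matrix (Fin m) (Fin m) ℂ))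
    (F : Fin 4 → Fin 4 → Module.End ℂ (Matrix (Fin m) (Fin m) ℂ))
    (hF : ∀ μ ν, F μ ν = dop μ * dop ν - dop ν * dop μ)
    (θ : Module.End ℂ (Matrix (Fin m) (Fin m) ℂ))
    (hθ : θ = ∑ μ, ∑ ν, (if μ = ν then e μ else 0) • (dop μ * dop ν)) :
    (∑ μ, matOp (γ μ) (dop μ)) * (∑ μ, matOp (γ μ) (dop μ)) =
      (1 / 2 : ℂ) • (∑ μ, ∑ ν, matOp (γ μ * γ ν) (F μ ν)) + matOp 1 θ := by
  simp only [hF, hθ]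
  exact sum_matOp_sq_of_clifford γ dop (fun μ ν => if μ = ν then e μ else 0) hCl

theorem stmt7 (p q k m : ℕ) (hpq : p + q = 4) (hk : 1 ≤ k) (hm : 1 ≤ m)
    (e : Fin 4 → ℂ) (he : ∀ μ, e μ = if (μ : ℕ) < p then 1 else -1)
    (γ : Fin 4 → Matrix (Fin k) (Fin k) ℂ)
    (hCl : ∀ μ ν, γ μ * γ ν + γ ν * γ μ =
      (2 * if μ = ν then e μ else 0) • (1 : Matrix (Fin k) (Fin k) ℂ))
    (hAdj : ∀ μ, (γ μ)ᴴ = e μ • γ μ)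
    (K A : Fin 4 → Matrix (Fin m) (Fin m) ℂ)
    (dop : Fin 4 → Module.End ℂ (Matrix (Fin m) (Fin m) ℂ))
    (hdop : ∀ μ, dop μ = brkt (K μ + A μ) (e μ))
    (F : Fin 4 → Fin 4 → Module.End ℂ (Matrix (Fin m) (Fin m) ℂ))
    (hF : ∀ μ ν, F μ ν = dop μ * dop ν - dop ν * dop μ)
    (θ : Module.End ℂ (Matrix (Fin m) (Fin m) ℂ))
    (hθ : θ = ∑ μ, ∑ ν, (if μ = ν then e μ else 0) • (dop μ * dop ν)) :
    (∑ μ, matOp (γ μ) (dop μ)) * (∑ μ, matOp (γ μ) (dop μ)) =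
      (1 / 2 : ℂ) • (∑ μ, ∑ ν, matOp (γ μ * γ ν) (F μ ν)) + matOp 1 θ :=
  stmt7_general k m e γ hCl dop F hF θ hθ
end
end

section
/- Let 𝖪_μ, 𝖠_μ, 𝖷_μ, 𝖲_μ ∈ M_m(ℂ) for μ ∈ {0,1,2,3}; define the operators 𝔡_μ = {𝖪_μ + 𝖠_μ, ·}_{e_μ} and 𝔵_μ = {𝖷_μ + 𝖲_μ, ·}_{e_{μ̂}} on M_m(ℂ), and let D_ω = Σ_μ ( γ^μ ⊗ 𝔡_μ + γ^{μ̂} ⊗ 𝔵_μ ) acting on ℂ^k ⊗ M_m(ℂ). Then D_ω² = Σ_{μ,ν} η^{μν} 1_k ⊗ (𝔡_μ ∘ 𝔡_ν) + (1/2) Σ_{μ,ν} γ^μ γ^ν ⊗ [𝔡_μ, 𝔡_ν] − det(η) Σ_μ e_μ 1_k ⊗ (𝔵_μ ∘ 𝔵_μ) + Σ_{μ<ν} t_{μν} γ^μ γ^ν ⊗ [𝔵_μ, 𝔵_ν] + (1/2) Σ_{μ,ν,σ,α} s_{μνασ} γ^α γ^σ ⊗ {𝔵_ν, 𝔡_μ}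 + Σ_μ (−1)^μ (γ^0 γ^1 γ^2 γ^3) ⊗ [𝔡_μ, 𝔵_μ], where s_{μνασ} = e_μ (−1)^μ sgn(ν−μ) sgn(σ−α) δ_{μνασ}, t_{μν} = (−1)^{1+|μ−ν|} Σ_{λ<ρ} δ_{μνλρ} e_λ e_ρ, and det(η) = e_0 e_1 e_2 e_3. (Paper: Proposition 4.7, the Weitzenböck formula for the fluctuated Dirac operator.) -/
open Matrix

noncomputable section

/-- `δ_{μνασ}`: 1 if the four indices are pairwise distinct, 0 otherwise. -/
def delta4 (μ ν α σ : Fin 4) : ℂ :=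
  if μ ≠ ν ∧ μ ≠ α ∧ μ ≠ σ ∧ ν ≠ α ∧ ν ≠ σ ∧ α ≠ σ then 1 else 0

/-- The sign `s_{μνασ} = e_μ (−1)^μ sgn(ν−μ) sgn(σ−α) δ_{μνασ}`. -/
def sSign (e : Fin 4 → ℂ) (μ ν α σ : Fin 4) : ℂ :=
  e μ * (-1 : ℂ) ^ (μ : ℕ) * (((ν : ℤ) - (μ : ℤ)).sign : ℂ) *
    (((σ : ℤ) - (α : ℤ)).sign : ℂ) * delta4 μ ν α σ

/-- The sign `t_{μν} = (−1)^{1+|μ−ν|} Σ_{λ<ρ} δ_{μνλρ} e_λ e_ρ`. -/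
def tSign (e : Fin 4 → ℂ) (μ ν : Fin 4) : ℂ :=
  (-1 : ℂ) ^ (1 + ((μ : ℤ) - (ν : ℤ)).natAbs) *
    ∑ lam : Fin 4, ∑ rho : Fin 4,
      if (lam : ℕ) < (rho : ℕ) then delta4 μ ν lam rho * e lam * e rho else 0

/-!
Put `Γ = γ^0 γ^1 γ^2 γ^3`. It anticommutes with every `γ^μ` and `Γ² = det η`, so that
`γ^{μ̂} = (-1)^{μ+1} e_μ Γ γ^μ`. For any family `g` satisfying the Clifford relations, splitting
`g_μ g_ν` into its symmetric part `η^{μν}` and its antisymmetric part turns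
`Σ g_μ g_ν ⊗ T_μ T_ν` into `Σ η^{μν} ⊗ T_μ T_ν + ½ Σ g_μ g_ν ⊗ [T_μ, T_ν]`. This handles the
`𝔡𝔡` terms with `g = γ`, and the `𝔵𝔵` terms with the rescaled family `g_μ = ±e_μ γ^μ`, since
`γ^{μ̂} γ^{ν̂} = -det η · g_μ g_ν`. In the mixed terms, `γ^μ γ^{ν̂}` and `γ^{ν̂} γ^μ` are the same
multiple of `Γ γ^μ γ^ν` for `μ ≠ ν`, which gives anticommutators with coefficient
`Γ γ^μ γ^ν = ±γ^α γ^σ` (`{α, σ}` the complementary pair); for `μ = ν` they are opposite multiples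
of `Γ` and give the commutators `[𝔡_μ, 𝔵_μ]`.
-/

section MatOp

variable {k : ℕ} {V : Type*} [AddCommGroup V] [Module ℂ V]

lemma matOp_mul_matOp (g h : Matrix (Fin k) (Fin k) ℂ) (T S : Module.End ℂ V) :
    matOp g T * matOp h S = matOp (g * h) (T * S) := by
  refine LinearMap.ext fun f => funext fun i => ?_
  simp only [Module.End.mul_apply, matOp_apply, Matrix.mul_apply, Finset.sum_smul, map_sum,
    _root_.map_smul, Finset.smul_sum, smul_smul]
  rw [Finset.sum_comm]

def matOpₗ : Matrix (Fin k) (Fin k) ℂ →ₗ[ℂ] Module.End ℂ V →ₗ[ℂ] Module.End ℂ (Fin k → V) :=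
  LinearMap.mk₂ ℂ matOp
    (fun g h T => LinearMap.ext fun f => funext fun i => by
      simp [matOp_apply, add_smul, Finset.sum_add_distrib])
    (fun c g T => LinearMap.ext fun f => funext fun i => by
      simp [matOp_apply, smul_smul, Finset.smul_sum])
    (fun g T S => LinearMap.ext fun f => funext fun i => by
      simp [matOp_apply, Finset.sum_add_distrib])
    (fun c g T => LinearMap.ext fun f => funext fun i => by
      simp [matOp_apply, smul_smul, Finset.smul_sum, mul_comm])

lemma matOpₗ_apply (g : Matrix (Fin k) (Fin k) ℂ) (T : Module.End ℂ V) :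
    matOpₗ g T = matOp g T := rfl

end MatOp

lemma half_smul_sum_sum_eq_sum_sum_lt {ι M : Type*} [Fintype ι] [LinearOrder ι] [AddCommGroup M]
    [Module ℂ M] (f : ι → ι → M) (hdiag : ∀ μ, f μ μ = 0) (hsymm : ∀ μ ν, f ν μ = f μ ν) :
    (1 / 2 : ℂ) • ∑ μ, ∑ ν, f μ ν = ∑ μ, ∑ ν, if μ < ν then f μ ν else 0 := by
  have hsplit : ∀ μ ν, f μ ν = (if μ < ν then f μ ν else 0) + if ν < μ then f ν μ else 0 := by
    intro μ ν
    rcases lt_trichotomy μ ν with h | rfl | h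
    · simp [h, h.not_gt]
    · simp [hdiag]
    · simp [h, h.not_gt, hsymm]
  calc (1 / 2 : ℂ) • ∑ μ, ∑ ν, f μ ν
      = (1 / 2 : ℂ) • ((∑ μ, ∑ ν, if μ < ν then f μ ν else 0)
          + ∑ μ, ∑ ν, if ν < μ then f ν μ else 0) := by
        simp only [← Finset.sum_add_distrib, ← hsplit]
    _ = ∑ μ, ∑ ν, if μ < ν then f μ ν else 0 := by
        rw [Finset.sum_comm (f := fun μ ν => if ν < μ then f ν μ else 0)]
        module

section Clifford

variable {ι : Type*} [DecidableEq ι] {k : ℕ} {e : ι → ℂ} {γ : ι → Matrix (Fin k) (Fin k) ℂ}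
  (hCl : ∀ μ ν, γ μ * γ ν + γ ν * γ μ =
    (2 * if μ = ν then e μ else 0) • (1 : Matrix (Fin k) (Fin k) ℂ))
include hCl

lemma gamma_mul_self (μ : ι) : γ μ * γ μ = e μ • 1 := by
  have h := hCl μ μ
  rw [if_pos rfl, ← two_smul ℂ (γ μ * γ μ), mul_smul] at h
  exact smul_right_injective _ two_ne_zero h

lemma gamma_mul_gamma_of_ne {μ ν : ι} (h : μ ≠ ν) : γ ν * γ μ = -(γ μ * γ ν) := by
  have h' := hCl μ ν
  rw [if_neg h, mul_zero, zero_smul] at h'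
  exact eq_neg_of_add_eq_zero_right h'

lemma gamma_mul_gamma_mul_self (μ : ι) (x : Matrix (Fin k) (Fin k) ℂ) :
    γ μ * (γ μ * x) = e μ • x := by
  rw [← mul_assoc, gamma_mul_self hCl, smul_mul_assoc, one_mul]

lemma gamma_mul_gamma_mul_of_ne {μ ν : ι} (h : μ ≠ ν) (x : Matrix (Fin k) (Fin k) ℂ) :
    γ ν * (γ μ * x) = -(γ μ * (γ ν * x)) := by
  rw [← mul_assoc, gamma_mul_gamma_of_ne hCl h, neg_mul, mul_assoc]

lemma anticomm_smul_gamma {c : ι → ℂ} (hc : ∀ μ, c μ * c μ = 1) (μ ν : ι) :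
    (c μ • γ μ) * (c ν • γ ν) + (c ν • γ ν) * (c μ • γ μ) =
      (2 * if μ = ν then e μ else 0) • (1 : Matrix (Fin k) (Fin k) ℂ) := by
  rw [smul_mul_smul_comm, smul_mul_smul_comm, mul_comm (c ν), ← smul_add, hCl, smul_smul]
  split_ifs with h
  · rw [h, hc, one_mul]
  · simp

lemma sum_matOp_mul_eq_of_anticomm [Fintype ι] {V : Type*} [AddCommGroup V] [Module ℂ V]
    (T : ι → Module.End ℂ V) :
    ∑ μ, ∑ ν, matOp (γ μ * γ ν) (T μ * T ν) =
      ∑ μ, ∑ ν, (if μ = ν then e μ else 0) • matOp 1 (T μ * T ν)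
      + (1 / 2 : ℂ) • ∑ μ, ∑ ν, matOp (γ μ * γ ν) (T μ * T ν - T ν * T μ) := by
  have hswap : ∑ μ, ∑ ν, matOp (γ μ * γ ν) (T ν * T μ) =
      (2 : ℂ) • ∑ μ, ∑ ν, (if μ = ν then e μ else 0) • matOp 1 (T μ * T ν)
        - ∑ μ, ∑ ν, matOp (γ μ * γ ν) (T μ * T ν) := by
    rw [Finset.sum_comm, Finset.smul_sum, ← Finset.sum_sub_distrib]
    refine Finset.sum_congr rfl fun μ _ => ?_
    rw [Finset.smul_sum, ← Finset.sum_sub_distrib]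
    refine Finset.sum_congr rfl fun ν _ => ?_
    rw [eq_sub_of_add_eq' (hCl μ ν), ← matOpₗ_apply, map_sub, map_smul, smul_smul]
    rfl
  simp only [← matOpₗ_apply, map_sub, Finset.sum_sub_distrib] at hswap ⊢
  rw [hswap]
  module

end Clifford

def volumeElement {k : ℕ} (γ : Fin 4 → Matrix (Fin k) (Fin k) ℂ) : Matrix (Fin k) (Fin k) ℂ :=
  γ 0 * γ 1 * γ 2 * γ 3

def hatSign (e : Fin 4 → ℂ) (μ : Fin 4) : ℂ := (-1) ^ ((μ : ℕ) + 1) * e μ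

section Signs

variable {e : Fin 4 → ℂ}

lemma hatSign_mul_self (he : ∀ μ, e μ * e μ = 1) (μ : Fin 4) :
    hatSign e μ * hatSign e μ = 1 := by
  rw [hatSign, mul_mul_mul_comm, ← pow_add, he, mul_one, Even.neg_one_pow ⟨_, rfl⟩]

lemma hatSign_mul_eq (he : ∀ μ, e μ * e μ = 1) (μ : Fin 4) :
    hatSign e μ * e μ = -(-1) ^ (μ : ℕ) := by
  rw [hatSign, mul_assoc, he, mul_one, pow_succ, mul_neg_one]

lemma sSign_self (e : Fin 4 → ℂ) (μ α σ : Fin 4) : sSign e μ μ α σ = 0 := by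
  simp [sSign, delta4]

lemma tSign_eq (he : ∀ μ, e μ * e μ = 1) {μ ν : Fin 4} (h : μ < ν) :
    tSign e μ ν = -(e 0 * e 1 * e 2 * e 3) * (hatSign e μ * hatSign e ν) := by
  fin_cases μ <;> fin_cases ν <;> simp [tSign, delta4, hatSign, Fin.sum_univ_four] at h ⊢ <;>
  grind

end Signs

section Gamma4

variable {k : ℕ} {e : Fin 4 → ℂ} {γ : Fin 4 → Matrix (Fin k) (Fin k) ℂ}
  (hCl : ∀ μ ν, γ μ * γ ν + γ ν * γ μ =
    (2 * if μ = ν then e μ else 0) • (1 : Matrix (Fin k) (Fin k) ℂ))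
include hCl

lemma gamma_mul_gamma_of_lt {μ ν : Fin 4} (h : μ < ν) : γ ν * γ μ = -(γ μ * γ ν) :=
  gamma_mul_gamma_of_ne hCl h.ne

lemma gamma_mul_gamma_mul_of_lt {μ ν : Fin 4} (h : μ < ν) (x : Matrix (Fin k) (Fin k) ℂ) :
    γ ν * (γ μ * x) = -(γ μ * (γ ν * x)) :=
  gamma_mul_gamma_mul_of_ne hCl h.ne x

lemma gamma_mul_volumeElement (μ : Fin 4) : γ μ * volumeElement γ = -(volumeElement γ * γ μ) := by
  fin_cases μ <;>
  simp [volumeElement, mul_assoc, gamma_mul_gamma_of_lt hCl, gamma_mul_gamma_mul_of_lt hCl,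
    gamma_mul_self hCl]

lemma volumeElement_mul_self :
    volumeElement γ * volumeElement γ = (e 0 * e 1 * e 2 * e 3) • 1 := by
  simp only [volumeElement, Fin.isValue, mul_assoc, Fin.reduceLT, gamma_mul_gamma_mul_of_lt hCl,
    gamma_mul_self hCl, mul_smul_comm, mul_one, mul_neg, neg_neg, smul_smul, zero_lt_one, smul_neg]
  module

lemma hatGamma_eq (he : ∀ μ, e μ * e μ = 1) {γh : Fin 4 → Matrix (Fin k) (Fin k) ℂ}
    (hγh0 : γh 0 = γ 1 * γ 2 * γ 3) (hγh1 : γh 1 = γ 0 * γ 2 * γ 3)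
    (hγh2 : γh 2 = γ 0 * γ 1 * γ 3) (hγh3 : γh 3 = γ 0 * γ 1 * γ 2) (μ : Fin 4) :
    γh μ = hatSign e μ • (volumeElement γ * γ μ) := by
  fin_cases μ <;>
  simp [hatSign, volumeElement, mul_assoc, gamma_mul_gamma_of_lt hCl,
    gamma_mul_gamma_mul_of_lt hCl, gamma_mul_self hCl, gamma_mul_gamma_mul_self hCl, smul_smul,
    pow_succ, hγh0, hγh1, hγh2, hγh3, he]

lemma sum_sSign_smul_gamma_mul_gamma (he : ∀ μ, e μ * e μ = 1) {μ ν : Fin 4} (h : μ ≠ ν) :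
    ∑ α, ∑ σ, sSign e μ ν α σ • (γ α * γ σ) =
      -(2 * hatSign e ν) • (volumeElement γ * γ μ * γ ν) := by
  have hsign2 : Int.sign 2 = 1 := rfl
  have hsign3 : Int.sign 3 = 1 := rfl
  fin_cases μ <;> fin_cases ν <;>
  simp +decide [sSign, delta4, hatSign, Fin.sum_univ_four, volumeElement, mul_assoc,
    gamma_mul_gamma_of_lt hCl, gamma_mul_gamma_mul_of_lt hCl, gamma_mul_self hCl,
    gamma_mul_gamma_mul_self hCl, smul_smul, pow_succ, hsign2, hsign3] at h ⊢ <;>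
  match_scalars <;> grind

variable {γh : Fin 4 → Matrix (Fin k) (Fin k) ℂ}
  (hγh : ∀ μ, γh μ = hatSign e μ • (volumeElement γ * γ μ))
include hγh

lemma hatGamma_mul_hatGamma (μ ν : Fin 4) :
    γh μ * γh ν = -(e 0 * e 1 * e 2 * e 3) • ((hatSign e μ • γ μ) * (hatSign e ν • γ ν)) := by
  rw [hγh, hγh, smul_mul_smul_comm, mul_assoc, ← mul_assoc (γ μ), gamma_mul_volumeElement hCl,
    neg_mul, mul_neg, ← mul_assoc, ← mul_assoc, volumeElement_mul_self hCl, smul_mul_assoc,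
    one_mul]
  simp only [smul_mul_assoc, mul_smul_comm]
  module

variable (he : ∀ μ, e μ * e μ = 1) {V : Type*} [AddCommGroup V] [Module ℂ V]
include he

lemma sum_matOp_hatGamma_mul_hatGamma (x : Fin 4 → Module.End ℂ V) :
    ∑ μ, ∑ ν, matOp (γh μ * γh ν) (x μ * x ν) =
      -(e 0 * e 1 * e 2 * e 3) • ∑ μ, e μ • matOp 1 (x μ * x μ)
      + ∑ μ : Fin 4, ∑ ν : Fin 4, if (μ : ℕ) < (ν : ℕ) then
          tSign e μ ν • matOp (γ μ * γ ν) (x μ * x ν - x ν * x μ) else 0 := by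
  set g : Fin 4 → Matrix (Fin k) (Fin k) ℂ := fun μ => hatSign e μ • γ μ with hg
  have hgCl : ∀ μ ν, g μ * g ν + g ν * g μ =
      (2 * if μ = ν then e μ else 0) • (1 : Matrix (Fin k) (Fin k) ℂ) :=
    anticomm_smul_gamma hCl (hatSign_mul_self he)
  have hsymm : ∀ μ ν, matOp (g ν * g μ) (x ν * x μ - x μ * x ν) =
      matOp (g μ * g ν) (x μ * x ν - x ν * x μ) := by
    intro μ ν
    by_cases h : μ = ν
    · rw [h]
    · simp only [gamma_mul_gamma_of_ne hgCl h, ← neg_sub (x μ * x ν), ← matOpₗ_apply, map_neg,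
        LinearMap.neg_apply, neg_neg]
  simp only [hatGamma_mul_hatGamma hCl hγh, ← matOpₗ_apply, map_smul, LinearMap.smul_apply,
    ← Finset.smul_sum]
  simp only [matOpₗ_apply]
  rw [sum_matOp_mul_eq_of_anticomm hgCl, half_smul_sum_sum_eq_sum_sum_lt _
    (fun _ => by rw [sub_self, ← matOpₗ_apply, map_zero]) hsymm, smul_add]
  congr 1
  · simp only [ite_smul, zero_smul, Finset.sum_ite_eq, Finset.mem_univ, if_true]
  · simp only [Finset.smul_sum, smul_ite, smul_zero]
    refine Finset.sum_congr rfl fun μ _ => Finset.sum_congr rfl fun ν _ => ?_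
    by_cases h : μ < ν
    · rw [if_pos h, if_pos (Fin.lt_def.mp h), tSign_eq he h, hg]
      simp only [smul_mul_smul_comm, ← matOpₗ_apply, map_smul, LinearMap.smul_apply, smul_smul]
    · rw [if_neg h, if_neg (mt Fin.lt_def.mpr h)]

lemma matOp_gamma_mul_hatGamma_add (d x : Fin 4 → Module.End ℂ V) (μ ν : Fin 4) :
    matOp (γ μ * γh ν) (d μ * x ν) + matOp (γh ν * γ μ) (x ν * d μ) =
      (1 / 2 : ℂ) • (∑ σ, ∑ α, sSign e μ ν α σ • matOp (γ α * γ σ) (x ν * d μ + d μ * x ν))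
      + if μ = ν then (-1 : ℂ) ^ (μ : ℕ) • matOp (volumeElement γ) (d μ * x μ - x μ * d μ)
        else 0 := by
  have hl : γ μ * γh ν = -hatSign e ν • (volumeElement γ * γ μ * γ ν) := by
    rw [hγh, mul_smul_comm, ← mul_assoc, gamma_mul_volumeElement hCl, neg_mul, neg_smul, smul_neg]
  have hr : γh ν * γ μ = hatSign e ν • (volumeElement γ * (γ ν * γ μ)) := by
    rw [hγh, smul_mul_assoc, mul_assoc]
  have hsum : ∑ σ, ∑ α, sSign e μ ν α σ • matOp (γ α * γ σ) (x ν * d μ + d μ * x ν) =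
      matOp (∑ α, ∑ σ, sSign e μ ν α σ • (γ α * γ σ)) (x ν * d μ + d μ * x ν) := by
    simp only [← matOpₗ_apply, map_sum, map_smul, LinearMap.sum_apply, LinearMap.smul_apply]
    exact Finset.sum_comm
  rw [hsum, hl, hr]
  by_cases h : μ = ν
  · subst h
    simp only [sSign_self, zero_smul, Finset.sum_const_zero, if_true, mul_assoc,
      gamma_mul_self hCl, mul_smul_comm, mul_one, smul_smul, ← matOpₗ_apply, map_smul, map_zero,
      map_sub, LinearMap.smul_apply, LinearMap.zero_apply, smul_zero, zero_add, neg_mul,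
      hatSign_mul_eq he]
    module
  · rw [sum_sSign_smul_gamma_mul_gamma hCl he h, gamma_mul_gamma_of_ne hCl h, if_neg h, mul_neg,
      ← mul_assoc]
    simp only [← matOpₗ_apply, map_smul, map_neg, LinearMap.smul_apply, LinearMap.neg_apply,
      map_add]
    module

lemma sum_matOp_gamma_mul_hatGamma_add (d x : Fin 4 → Module.End ℂ V) :
    ∑ μ, ∑ ν, matOp (γ μ * γh ν) (d μ * x ν) + ∑ μ, ∑ ν, matOp (γh μ * γ ν) (x μ * d ν) =
      (1 / 2 : ℂ) • (∑ μ : Fin 4, ∑ ν : Fin 4, ∑ σ : Fin 4, ∑ α : Fin 4,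
          sSign e μ ν α σ • matOp (γ α * γ σ) (x ν * d μ + d μ * x ν))
      + ∑ μ : Fin 4, ((-1 : ℂ) ^ (μ : ℕ)) •
          matOp (γ 0 * γ 1 * γ 2 * γ 3) (d μ * x μ - x μ * d μ) := by
  rw [Finset.sum_comm (f := fun μ ν => matOp (γh μ * γ ν) (x μ * d ν))]
  simp only [← Finset.sum_add_distrib, matOp_gamma_mul_hatGamma_add hCl hγh he]
  simp only [Finset.sum_add_distrib, Finset.sum_ite_eq, Finset.mem_univ, if_true, Finset.smul_sum]
  rfl

end Gamma4

theorem stmt8_general (p k m : ℕ)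
    (e : Fin 4 → ℂ) (he : ∀ μ, e μ = if (μ : ℕ) < p then 1 else -1)
    (γ : Fin 4 → Matrix (Fin k) (Fin k) ℂ)
    (hCl : ∀ μ ν, γ μ * γ ν + γ ν * γ μ =
      (2 * if μ = ν then e μ else 0) • (1 : Matrix (Fin k) (Fin k) ℂ))
    (γh : Fin 4 → Matrix (Fin k) (Fin k) ℂ)
    (hγh0 : γh 0 = γ 1 * γ 2 * γ 3) (hγh1 : γh 1 = γ 0 * γ 2 * γ 3)
    (hγh2 : γh 2 = γ 0 * γ 1 * γ 3) (hγh3 : γh 3 = γ 0 * γ 1 * γ 2)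
    (kop xop : Fin 4 → Module.End ℂ (Matrix (Fin m) (Fin m) ℂ))
    (D : Module.End ℂ (Fin k → Matrix (Fin m) (Fin m) ℂ))
    (hD : D = ∑ μ, (matOp (γ μ) (kop μ) + matOp (γh μ) (xop μ))) :
    D * D =
      (∑ μ, ∑ ν, (if μ = ν then e μ else 0) • matOp 1 (kop μ * kop ν))
      + (1 / 2 : ℂ) • (∑ μ, ∑ ν, matOp (γ μ * γ ν) (kop μ * kop ν - kop ν * kop μ))
      - (e 0 * e 1 * e 2 * e 3) • (∑ μ, e μ • matOp 1 (xop μ * xop μ))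
      + (∑ μ : Fin 4, ∑ ν : Fin 4, if (μ : ℕ) < (ν : ℕ) then
          tSign e μ ν • matOp (γ μ * γ ν) (xop μ * xop ν - xop ν * xop μ) else 0)
      + (1 / 2 : ℂ) • (∑ μ : Fin 4, ∑ ν : Fin 4, ∑ σ : Fin 4, ∑ α : Fin 4,
          sSign e μ ν α σ • matOp (γ α * γ σ) (xop ν * kop μ + kop μ * xop ν))
      + (∑ μ : Fin 4, ((-1 : ℂ) ^ (μ : ℕ)) •
          matOp (γ 0 * γ 1 * γ 2 * γ 3) (kop μ * xop μ - xop μ * kop μ)) := by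
  have he2 : ∀ μ, e μ * e μ = 1 := fun μ => by rw [he]; split_ifs <;> norm_num
  have hγh := hatGamma_eq hCl he2 hγh0 hγh1 hγh2 hγh3
  have hdd := sum_matOp_mul_eq_of_anticomm hCl kop
  have hxx := sum_matOp_hatGamma_mul_hatGamma hCl hγh he2 xop
  have hdx := sum_matOp_gamma_mul_hatGamma_add hCl hγh he2 kop xop
  subst hD
  simp only [Finset.sum_mul_sum, add_mul, mul_add, matOp_mul_matOp, Finset.sum_add_distrib]
  linear_combination (norm := module) hdd + hxx + hdx

theorem stmt8 (p q k m : ℕ) (hpq : p + q = 4) (hk : 1 ≤ k) (hm : 1 ≤ m)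
    (e : Fin 4 → ℂ) (he : ∀ μ, e μ = if (μ : ℕ) < p then 1 else -1)
    (γ : Fin 4 → Matrix (Fin k) (Fin k) ℂ)
    (hCl : ∀ μ ν, γ μ * γ ν + γ ν * γ μ =
      (2 * if μ = ν then e μ else 0) • (1 : Matrix (Fin k) (Fin k) ℂ))
    (hAdj : ∀ μ, (γ μ)ᴴ = e μ • γ μ)
    (γh : Fin 4 → Matrix (Fin k) (Fin k) ℂ)
    (hγh0 : γh 0 = γ 1 * γ 2 * γ 3) (hγh1 : γh 1 = γ 0 * γ 2 * γ 3)
    (hγh2 : γh 2 = γ 0 * γ 1 * γ 3) (hγh3 : γh 3 = γ 0 * γ 1 * γ 2)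
    (eh : Fin 4 → ℂ) (heh : ∀ μ, eh μ = (-1 : ℂ) ^ (q + 1) * e μ)
    (K A X S : Fin 4 → Matrix (Fin m) (Fin m) ℂ)
    (kop xop : Fin 4 → Module.End ℂ (Matrix (Fin m) (Fin m) ℂ))
    (hkop : ∀ μ, kop μ = brkt (K μ + A μ) (e μ))
    (hxop : ∀ μ, xop μ = brkt (X μ + S μ) (eh μ))
    (D : Module.End ℂ (Fin k → Matrix (Fin m) (Fin m) ℂ))
    (hD : D = ∑ μ, (matOp (γ μ) (kop μ) + matOp (γh μ) (xop μ))) :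
    D * D =
      (∑ μ, ∑ ν, (if μ = ν then e μ else 0) • matOp 1 (kop μ * kop ν))
      + (1 / 2 : ℂ) • (∑ μ, ∑ ν, matOp (γ μ * γ ν) (kop μ * kop ν - kop ν * kop μ))
      - (e 0 * e 1 * e 2 * e 3) • (∑ μ, e μ • matOp 1 (xop μ * xop μ))
      + (∑ μ : Fin 4, ∑ ν : Fin 4, if (μ : ℕ) < (ν : ℕ) then
          tSign e μ ν • matOp (γ μ * γ ν) (xop μ * xop ν - xop ν * xop μ) else 0)
      + (1 / 2 : ℂ) • (∑ μ : Fin 4, ∑ ν : Fin 4, ∑ σ : Fin 4, ∑ α : Fin 4,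
          sSign e μ ν α σ • matOp (γ α * γ σ) (xop ν * kop μ + kop μ * xop ν))
      + (∑ μ : Fin 4, ((-1 : ℂ) ^ (μ : ℕ)) •
          matOp (γ 0 * γ 1 * γ 2 * γ 3) (kop μ * xop μ - xop μ * kop μ)) :=
  stmt8_general p k m e he γ hCl γh hγh0 hγh1 hγh2 hγh3 kop xop D hD
end
end

section
/- Let γ_{ch} ∈ M_k(ℂ) be self-adjoint with γ_{ch}² = 1_k, let ε'' ∈ {+1, −1}, and assume C γ_{ch} = ε'' γ_{ch} C. Let D_F ∈ M_n(ℂ) be self-adjoint and let D_H be the operator on H with D_H(v⊗Y⊗ψ) = γ_{ch} v ⊗ Y ⊗ (D_F ψ). Let ω_F = Σ_j ρ(W_j⊗a_j) ∘ ( D_H ∘ ρ(T_j⊗c_j) − ρ(T_j⊗c_j) ∘ D_H ) be a finite sum with W_j, T_j ∈ M_N(ℂ), a_j, c_j ∈ M_n(ℂ), assume ω_F is self-adjoint, and set φ = Σ_j (W_j T_j) ⊗ ( a_j (D_F c_j − c_j D_F) ) ∈ M_{Nn}(ℂ). Then φ* = φ, and for all v, Y, ψ: (ω_F + J∘ω_F∘J^{−1})(v⊗Y⊗ψ)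 = γ_{ch} v ⊗ φ·(Y⊗ψ) + ε'' · γ_{ch} v ⊗ (Y⊗ψ)·φ, where Y⊗ψ ∈ M_{Nn}(ℂ) and · is matrix multiplication. (Paper: Proposition 6.1, the inner fluctuations of the Dirac operator along the finite geometry F.) -/
open Matrix
open scoped Kronecker

noncomputable section

/-- The pure tensor `v ⊗ M` in `ℂ^k ⊗ M_{Nn}(ℂ) ≅ (Fin k → M_{Nn}(ℂ))`. -/
def pt {k : ℕ} {ι : Type*} (v : Fin k → ℂ) (M : Matrix ι ι ℂ) :
    Fin k → Matrix ι ι ℂ :=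
  fun i => v i • M

/-- The representation `ρ(P)` acting by left multiplication by `P` on the matrix factor. -/
def rho {k : ℕ} {ι : Type*} [Fintype ι] (P : Matrix ι ι ℂ) :
    Module.End ℂ (Fin k → Matrix ι ι ℂ) :=
  (LinearMap.mulLeft ℂ P).compLeft (Fin k)

/-- The inner product `⟨v⊗Y⊗ψ, w⊗Z⊗χ⟩ = ⟨v,w⟩ Tr(Y*Z) Tr(ψ*χ)` on
`H = ℂ^k ⊗ M_N(ℂ) ⊗ M_n(ℂ) ≅ (Fin k → M_{Nn}(ℂ))`. -/
def inn {k : ℕ} {ι : Type*} [Fintype ι] (f g : Fin k → Matrix ι ι ℂ) : ℂ :=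
  ∑ i, Matrix.trace ((f i)ᴴ * g i)

/-! Since `D_H` acts on the matrix factor only through `D_F`, each term of `ω_F` acts on a pure
tensor `v ⊗ M` as `γ_ch v ⊗ (W T ⊗ a [D_F, c]) M`, so `ω_F = γ_ch ⊗ (left multiplication by φ)`.
Testing the symmetry of `ω_F` on matrix units, with `γ_ch` a self-adjoint involution, gives
`φ* = φ`. Conjugating by `J` turns left multiplication by `φ` into right multiplication by `φ*`,
and moving `C` past `γ_ch` produces the sign `ε''`. -/

theorem Matrix.kronecker_sub {l m n p α : Type*} [NonUnitalNonAssocRing α] (A : Matrix l m α)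
    (B₁ B₂ : Matrix n p α) :
    A ⊗ₖ (B₁ - B₂) = A ⊗ₖ B₁ - A ⊗ₖ B₂ := by
  ext; simp [mul_sub]

section PureTensor

variable {k : ℕ} {ι : Type*}

theorem pt_sub (v : Fin k → ℂ) (A B : Matrix ι ι ℂ) : pt v (A - B) = pt v A - pt v B := by
  funext i; simp [pt, smul_sub]

theorem pt_sum {β : Type*} [Fintype β] (v : Fin k → ℂ) (M : β → Matrix ι ι ℂ) :
    pt v (∑ j, M j) = ∑ j, pt v (M j) := by
  funext i; simp [pt, Finset.smul_sum]

theorem pt_smul (c : ℂ) (v : Fin k → ℂ) (M : Matrix ι ι ℂ) : pt (c • v) M = c • pt v M := by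
  funext i; simp [pt, smul_smul]

variable [Fintype ι]

theorem rho_pt (P M : Matrix ι ι ℂ) (v : Fin k → ℂ) : rho P (pt v M) = pt v (P * M) := by
  funext i; exact Matrix.mul_smul P (v i) M

theorem inn_pt_pt (v w : Fin k → ℂ) (A B : Matrix ι ι ℂ) :
    inn (pt v A) (pt w B) = (star v ⬝ᵥ w) * trace (Aᴴ * B) := by
  simp only [inn, pt, conjTranspose_smul, smul_mul_smul_comm, trace_smul, smul_eq_mul,
    dotProduct, Finset.sum_mul, Pi.star_apply]

end PureTensor

section ConnesOneForm

variable {k : ℕ} {ι κ : Type*} [Fintype ι] [Fintype κ]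
  {γ : Matrix (Fin k) (Fin k) ℂ} {DF : Matrix κ κ ℂ}
  {DH : Module.End ℂ (Fin k → Matrix (ι × κ) (ι × κ) ℂ)}

theorem rho_mul_commutator_apply_pt
    (hDH : ∀ v (Y : Matrix ι ι ℂ) ψ, DH (pt v (Y ⊗ₖ ψ)) = pt (γ *ᵥ v) (Y ⊗ₖ (DF * ψ)))
    (W T : Matrix ι ι ℂ) (a c : Matrix κ κ ℂ) (v : Fin k → ℂ) (Y : Matrix ι ι ℂ)
    (ψ : Matrix κ κ ℂ) :
    (rho (W ⊗ₖ a) * (DH * rho (T ⊗ₖ c) - rho (T ⊗ₖ c) * DH) : Module.End ℂ _) (pt v (Y ⊗ₖ ψ)) =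
      pt (γ *ᵥ v) (((W * T) ⊗ₖ (a * (DF * c - c * DF))) * (Y ⊗ₖ ψ)) := by
  simp only [Module.End.mul_apply, LinearMap.sub_apply, rho_pt, ← mul_kronecker_mul,
    hDH, ← pt_sub, ← kronecker_sub]
  congr 2
  · simp only [Matrix.mul_assoc]
  · noncomm_ring

theorem sum_rho_mul_commutator_apply_pt
    (hDH : ∀ v (Y : Matrix ι ι ℂ) ψ, DH (pt v (Y ⊗ₖ ψ)) = pt (γ *ᵥ v) (Y ⊗ₖ (DF * ψ)))
    {β : Type*} [Fintype β] (W T : β → Matrix ι ι ℂ) (a c : β → Matrix κ κ ℂ)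
    (v : Fin k → ℂ) (Y : Matrix ι ι ℂ) (ψ : Matrix κ κ ℂ) :
    (∑ j, rho (W j ⊗ₖ a j) * (DH * rho (T j ⊗ₖ c j) - rho (T j ⊗ₖ c j) * DH) : Module.End ℂ _)
        (pt v (Y ⊗ₖ ψ)) =
      pt (γ *ᵥ v) ((∑ j, (W j * T j) ⊗ₖ (a j * (DF * c j - c j * DF))) * (Y ⊗ₖ ψ)) := by
  simp only [LinearMap.sum_apply, rho_mul_commutator_apply_pt hDH, Finset.sum_mul, pt_sum]

end ConnesOneForm

theorem trace_conjTranspose_mul_eq_of_inn_symm {k : ℕ} {ι : Type*} [Fintype ι]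
    {γ : Matrix (Fin k) (Fin k) ℂ} (hγ : γᴴ = γ) (hγ2 : γ * γ = 1)
    {Ω : (Fin k → Matrix ι ι ℂ) → (Fin k → Matrix ι ι ℂ)} (hΩ : ∀ f g, inn (Ω f) g = inn f (Ω g))
    {φ X Z : Matrix ι ι ℂ} (hX : ∀ v, Ω (pt v X) = pt (γ *ᵥ v) (φ * X))
    (hZ : ∀ v, Ω (pt v Z) = pt (γ *ᵥ v) (φ * Z)) {v : Fin k → ℂ} (hv : star v ⬝ᵥ v ≠ 0) :
    trace ((φ * X)ᴴ * Z) = trace (Xᴴ * (φ * Z)) := by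
  have h := hΩ (pt v X) (pt (γ *ᵥ v) Z)
  rwa [hX, hZ, mulVec_mulVec, hγ2, one_mulVec, inn_pt_pt, inn_pt_pt, star_mulVec,
    dotProduct_mulVec, vecMul_vecMul, hγ, hγ2, vecMul_one, mul_right_inj' hv] at h

theorem conjTranspose_eq_self_of_inn_symm {k : ℕ} {ι κ : Type*} [Fintype ι] [Fintype κ]
    [DecidableEq ι] [DecidableEq κ] (hk : 0 < k)
    {γ : Matrix (Fin k) (Fin k) ℂ} (hγ : γᴴ = γ) (hγ2 : γ * γ = 1)
    {Ω : (Fin k → Matrix (ι × κ) (ι × κ) ℂ) → (Fin k → Matrix (ι × κ) (ι × κ) ℂ)}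
    (hΩ : ∀ f g, inn (Ω f) g = inn f (Ω g)) {φ : Matrix (ι × κ) (ι × κ) ℂ}
    (hΩφ : ∀ v Y ψ, Ω (pt v (Y ⊗ₖ ψ)) = pt (γ *ᵥ v) (φ * (Y ⊗ₖ ψ))) :
    φᴴ = φ := by
  ext p q
  have h := trace_conjTranspose_mul_eq_of_inn_symm hγ hγ2 hΩ (X := 1) (Z := single q p 1)
    (fun v => by simpa [one_kronecker_one] using hΩφ v 1 1)
    (fun v => by
      simpa [single_kronecker_single] using hΩφ v (single q.1 p.1 1) (single q.2 p.2 1))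
    (v := Pi.single ⟨0, hk⟩ 1) (by simp)
  simpa [trace_mul_single] using h

theorem apply_pt_sum_kronecker {k : ℕ} {ι κ β : Type*} [Fintype β]
    {J : (Fin k → Matrix (ι × κ) (ι × κ) ℂ) → (Fin k → Matrix (ι × κ) (ι × κ) ℂ)}
    {C : (Fin k → ℂ) → (Fin k → ℂ)} (hJadd : ∀ f g, J (f + g) = J f + J g)
    (hJ : ∀ v (Y : Matrix ι ι ℂ) (ψ : Matrix κ κ ℂ), J (pt v (Y ⊗ₖ ψ)) = pt (C v) (Yᴴ ⊗ₖ ψᴴ))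
    (w : Fin k → ℂ) (A : β → Matrix ι ι ℂ) (B : β → Matrix κ κ ℂ) :
    J (pt w (∑ j, A j ⊗ₖ B j)) = pt (C w) (∑ j, A j ⊗ₖ B j)ᴴ := by
  rw [pt_sum, ← AddMonoidHom.mk'_apply J hJadd, map_sum]
  simp only [AddMonoidHom.mk'_apply, hJ, conjTranspose_sum, conjTranspose_kronecker, pt_sum]

theorem stmt14_general (k N n : ℕ) (hk : 1 ≤ k)
    -- the chirality `γ_ch`, self-adjoint with square one
    (γch : Matrix (Fin k) (Fin k) ℂ)
    (hγchsa : γchᴴ = γch) (hγch2 : γch * γch = 1)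
    (ε : ℂ)
    -- the charge conjugation `C`: a conjugate-linear bijection with `C γ_ch = ε'' γ_ch C`
    (C : (Fin k → ℂ) ≃ (Fin k → ℂ))
    (hCγch : ∀ v, C (γch.mulVec v) = ε • γch.mulVec (C v))
    -- the finite Dirac operator `D_F`, self-adjoint
    (DF : Matrix (Fin n) (Fin n) ℂ)
    -- the operator `D_H` with `D_H(v⊗Y⊗ψ) = γ_ch v ⊗ Y ⊗ (D_F ψ)`
    (DH : Module.End ℂ (Fin k → Matrix (Fin N × Fin n) (Fin N × Fin n) ℂ))
    (hDH : ∀ (v : Fin k → ℂ) (Y : Matrix (Fin N) (Fin N) ℂ) (ψ : Matrix (Fin n) (Fin n) ℂ),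
      DH (pt v (Y ⊗ₖ ψ)) = pt (γch.mulVec v) (Y ⊗ₖ (DF * ψ)))
    -- the real structure `J`
    (J : (Fin k → Matrix (Fin N × Fin n) (Fin N × Fin n) ℂ) ≃
      (Fin k → Matrix (Fin N × Fin n) (Fin N × Fin n) ℂ))
    (hJadd : ∀ f g, J (f + g) = J f + J g)
    (hJ : ∀ (v : Fin k → ℂ) (Y : Matrix (Fin N) (Fin N) ℂ) (ψ : Matrix (Fin n) (Fin n) ℂ),
      J (pt v (Y ⊗ₖ ψ)) = pt (C v) (Yᴴ ⊗ₖ ψᴴ))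
    -- the Connes one-form `ω_F`, assumed self-adjoint
    (r : ℕ) (W T : Fin r → Matrix (Fin N) (Fin N) ℂ)
    (a c : Fin r → Matrix (Fin n) (Fin n) ℂ)
    (ωF : Module.End ℂ (Fin k → Matrix (Fin N × Fin n) (Fin N × Fin n) ℂ))
    (hωF : ωF = ∑ j, rho (W j ⊗ₖ a j) *
      (DH * rho (T j ⊗ₖ c j) - rho (T j ⊗ₖ c j) * DH))
    (hsa : ∀ f g, inn (ωF f) g = inn f (ωF g))
    -- the field `φ`
    (φ : Matrix (Fin N × Fin n) (Fin N × Fin n) ℂ)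
    (hφ : φ = ∑ j, (W j * T j) ⊗ₖ (a j * (DF * c j - c j * DF))) :
    φᴴ = φ ∧
    ∀ (v : Fin k → ℂ) (Y : Matrix (Fin N) (Fin N) ℂ) (ψ : Matrix (Fin n) (Fin n) ℂ),
      ωF (pt v (Y ⊗ₖ ψ)) + J (ωF (J.symm (pt v (Y ⊗ₖ ψ)))) =
        pt (γch.mulVec v) (φ * (Y ⊗ₖ ψ)) +
          ε • pt (γch.mulVec v) ((Y ⊗ₖ ψ) * φ) := by
  have hω : ∀ v Y ψ, ωF (pt v (Y ⊗ₖ ψ)) = pt (γch *ᵥ v) (φ * (Y ⊗ₖ ψ)) := by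
    subst hωF hφ
    exact sum_rho_mul_commutator_apply_pt hDH W T a c
  have hφsa : φᴴ = φ := conjTranspose_eq_self_of_inn_symm hk hγchsa hγch2 hsa hω
  refine ⟨hφsa, fun v Y ψ => ?_⟩
  have hJsymm : J.symm (pt v (Y ⊗ₖ ψ)) = pt (C.symm v) (Yᴴ ⊗ₖ ψᴴ) := by
    rw [Equiv.symm_apply_eq, hJ, C.apply_symm_apply, conjTranspose_conjTranspose,
      conjTranspose_conjTranspose]
  -- `J` is only known on pure tensors, so `φ (Yᴴ ⊗ ψᴴ)` is expanded into Kronecker products.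
  have hφY : φ * (Yᴴ ⊗ₖ ψᴴ) =
      ∑ j, (W j * T j * Yᴴ) ⊗ₖ (a j * (DF * c j - c j * DF) * ψᴴ) := by
    simp only [hφ, Finset.sum_mul, mul_kronecker_mul]
  rw [hJsymm, hω, hω, hφY, apply_pt_sum_kronecker hJadd hJ, ← hφY, hCγch, C.apply_symm_apply,
    pt_smul, conjTranspose_mul, conjTranspose_kronecker, conjTranspose_conjTranspose,
    conjTranspose_conjTranspose, hφsa]

theorem stmt14 (k N n : ℕ) (hk : 1 ≤ k) (hN : 1 ≤ N) (hn : 1 ≤ n)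
    -- the chirality `γ_ch`, self-adjoint with square one
    (γch : Matrix (Fin k) (Fin k) ℂ)
    (hγchsa : γchᴴ = γch) (hγch2 : γch * γch = 1)
    (ε : ℂ) (hε : ε = 1 ∨ ε = -1)
    -- the charge conjugation `C`: a conjugate-linear bijection with `C γ_ch = ε'' γ_ch C`
    (C : (Fin k → ℂ) ≃ (Fin k → ℂ))
    (hCadd : ∀ v w, C (v + w) = C v + C w)
    (hCsmul : ∀ (c : ℂ) v, C (c • v) = (starRingEnd ℂ c) • C v)
    (hCγch : ∀ v, C (γch.mulVec v) = ε • γch.mulVec (C v))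
    -- the finite Dirac operator `D_F`, self-adjoint
    (DF : Matrix (Fin n) (Fin n) ℂ) (hDF : DFᴴ = DF)
    -- the operator `D_H` with `D_H(v⊗Y⊗ψ) = γ_ch v ⊗ Y ⊗ (D_F ψ)`
    (DH : Module.End ℂ (Fin k → Matrix (Fin N × Fin n) (Fin N × Fin n) ℂ))
    (hDH : ∀ (v : Fin k → ℂ) (Y : Matrix (Fin N) (Fin N) ℂ) (ψ : Matrix (Fin n) (Fin n) ℂ),
      DH (pt v (Y ⊗ₖ ψ)) = pt (γch.mulVec v) (Y ⊗ₖ (DF * ψ)))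
    -- the real structure `J`
    (J : (Fin k → Matrix (Fin N × Fin n) (Fin N × Fin n) ℂ) ≃
      (Fin k → Matrix (Fin N × Fin n) (Fin N × Fin n) ℂ))
    (hJadd : ∀ f g, J (f + g) = J f + J g)
    (hJsmul : ∀ (c : ℂ) f, J (c • f) = (starRingEnd ℂ c) • J f)
    (hJ : ∀ (v : Fin k → ℂ) (Y : Matrix (Fin N) (Fin N) ℂ) (ψ : Matrix (Fin n) (Fin n) ℂ),
      J (pt v (Y ⊗ₖ ψ)) = pt (C v) (Yᴴ ⊗ₖ ψᴴ))
    -- the Connes one-form `ω_F`, assumed self-adjoint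
    (r : ℕ) (W T : Fin r → Matrix (Fin N) (Fin N) ℂ)
    (a c : Fin r → Matrix (Fin n) (Fin n) ℂ)
    (ωF : Module.End ℂ (Fin k → Matrix (Fin N × Fin n) (Fin N × Fin n) ℂ))
    (hωF : ωF = ∑ j, rho (W j ⊗ₖ a j) *
      (DH * rho (T j ⊗ₖ c j) - rho (T j ⊗ₖ c j) * DH))
    (hsa : ∀ f g, inn (ωF f) g = inn f (ωF g))
    -- the field `φ`
    (φ : Matrix (Fin N × Fin n) (Fin N × Fin n) ℂ)
    (hφ : φ = ∑ j, (W j * T j) ⊗ₖ (a j * (DF * c j - c j * DF))) :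
    φᴴ = φ ∧
    ∀ (v : Fin k → ℂ) (Y : Matrix (Fin N) (Fin N) ℂ) (ψ : Matrix (Fin n) (Fin n) ℂ),
      ωF (pt v (Y ⊗ₖ ψ)) + J (ωF (J.symm (pt v (Y ⊗ₖ ψ)))) =
        pt (γch.mulVec v) (φ * (Y ⊗ₖ ψ)) +
          ε • pt (γch.mulVec v) ((Y ⊗ₖ ψ) * φ) :=
  stmt14_general k N n hk γch hγchsa hγch2 ε C hCγch DF DH hDH J hJadd hJ r W T a c ωF hωF hsa φ hφ
end
end

section
/- Assume k = 4. Let γ_{ch} = σ(η) γ^0 γ^1 γ^2 γ^3 with σ(η) = (−i)^{(q−p)(q−p+1)/2}, and assume γ_{ch}² = 1_4. Let 𝖪_μ, 𝖠_μ ∈ M_m(ℂ), define 𝔡_μ = {𝖪_μ + 𝖠_μ, ·}_{e_μ} on M_m(ℂ), 𝔉_{μν} = [𝔡_μ, 𝔡_ν], θ = Σ_{μ,ν} η^{μν} 𝔡_μ ∘ 𝔡_ν, let Φ be any linear operator on M_m(ℂ), and set D_ω = Σ_μ γ^μ ⊗ 𝔡_μ + γ_{ch} ⊗ Φ on ℂ⁴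 ⊗ M_m(ℂ). Then (1/4)·Tr(D_ω⁴) = −(1/2) Σ_{μ,ν} e_μ e_ν Tr( 𝔉_{μν} ∘ 𝔉_{μν} ) + Tr( (θ + Φ∘Φ) ∘ (θ + Φ∘Φ) ) − Σ_μ e_μ Tr( [𝔡_μ, Φ] ∘ [𝔡_μ, Φ] ), where the left-hand trace is over endomorphisms of ℂ⁴ ⊗ M_m(ℂ) and the right-hand traces are over endomorphisms of M_m(ℂ). (Paper: Lemma 6.5, trace of the fourth power of the fully fluctuated Dirac operator.) -/
open Matrix

noncomputable section

/-!
Write `Dω = ∑ₐ Γₐ ⊗ Tₐ` over the five indices `a ∈ {none} ∪ Fin 4`, with `(Γ, T) = (γch, Φ)` at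
`none` and `(γ^μ, 𝔡_μ)` at `μ`. Since `γch` squares to one and anticommutes with every `γ^μ`, the
five `Γₐ` satisfy the Clifford relations for the diagonal metric `(1, e₀, …, e₃)`. Then
`Tr(Dω⁴) = ∑ tr(ΓₐΓ_bΓ_cΓ_d) Tr(TₐT_bT_cT_d)`, and the four-gamma trace
`4 (η_ab η_cd - η_ac η_bd + η_ad η_bc)` turns this into
`4 (Tr(θ'²) - ½ ∑ εₐ ε_b Tr([Tₐ, T_b]²))` with `θ' = ∑ εₐ Tₐ² = θ + Φ²`.
Splitting off the index `none` gives the field-strength and `[𝔡_μ, Φ]` terms.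
-/

section MatOp

variable {k : ℕ} {V : Type*} [AddCommGroup V] [Module ℂ V]

lemma matOp_eq_conj_map (g : Matrix (Fin k) (Fin k) ℂ) (T : Module.End ℂ V) :
    matOp g T = (TensorProduct.piScalarRight ℂ ℂ V (Fin k)).conj
      (TensorProduct.map T (Matrix.toLin' g)) := by
  set e := TensorProduct.piScalarRight ℂ ℂ V (Fin k)
  have h : matOp g T ∘ₗ e.toLinearMap = e.toLinearMap ∘ₗ TensorProduct.map T (Matrix.toLin' g) :=
    TensorProduct.ext' fun v w => by
      ext i
      simp [e, matOp_apply, Matrix.mulVec, dotProduct, Finset.sum_smul, smul_smul]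
  rw [LinearEquiv.conj_apply, ← h, LinearMap.comp_assoc]
  ext x
  simp

lemma trace_matOp [Module.Finite ℂ V] (g : Matrix (Fin k) (Fin k) ℂ) (T : Module.End ℂ V) :
    LinearMap.trace ℂ _ (matOp g T) = g.trace * LinearMap.trace ℂ V T := by
  rw [matOp_eq_conj_map, LinearMap.trace_conj', LinearMap.trace_tensorProduct',
    Matrix.trace_toLin'_eq, mul_comm]

end MatOp

section Clifford

variable {K n ι : Type*} [Field K] [NeZero (2 : K)] [Fintype n] [DecidableEq n]
  {G : ι → Matrix n n K} {η : ι → ι → K}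

lemma trace_mul_of_clifford (hG : ∀ i j, G i * G j + G j * G i = (2 * η i j) • 1) (i j : ι) :
    (G i * G j).trace = η i j * Fintype.card n := by
  have h := congrArg Matrix.trace (hG i j)
  rw [trace_add, trace_mul_comm (G j), trace_smul, trace_one, smul_eq_mul] at h
  exact mul_left_cancel₀ two_ne_zero (by linear_combination h)

lemma trace_mul_mul_mul_of_clifford (hG : ∀ i j, G i * G j + G j * G i = (2 * η i j) • 1)
    (a b c d : ι) :
    (G a * G b * G c * G d).trace =
      (η a b * η c d - η a c * η b d + η a d * η b c) * Fintype.card n := by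
  have hab : (G a * G b * G c * G d).trace + (G b * G a * G c * G d).trace =
      2 * η a b * (G c * G d).trace := by
    rw [← trace_add, ← add_mul, ← add_mul, hG, smul_mul_assoc, one_mul, smul_mul_assoc,
      trace_smul, smul_eq_mul]
  have hac : (G b * G a * G c * G d).trace + (G b * G c * G a * G d).trace =
      2 * η a c * (G b * G d).trace := by
    rw [← trace_add, mul_assoc (G b) (G a), mul_assoc (G b) (G c), ← add_mul, ← mul_add, hG,
      mul_smul_comm, mul_one, smul_mul_assoc, trace_smul, smul_eq_mul]
  have had : (G b * G c * G a * G d).trace + (G b * G c * G d * G a).trace =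
      2 * η a d * (G b * G c).trace := by
    rw [← trace_add, mul_assoc (G b * G c), mul_assoc (G b * G c), ← mul_add, hG,
      mul_smul_comm, mul_one, trace_smul, smul_eq_mul]
  have hcyc : (G b * G c * G d * G a).trace = (G a * G b * G c * G d).trace := by
    rw [trace_mul_comm, ← mul_assoc, ← mul_assoc]
  -- `hab`, `hac`, `had` move `G a` from the front to the back; `hcyc` cycles it to the front again.
  simp only [trace_mul_of_clifford hG] at hab hac had
  exact mul_left_cancel₀ two_ne_zero (by linear_combination hab - hac + had - hcyc)

end Clifford

lemma mul_mul_eq_zsmul_of_mul_eq_zsmul {A : Type*} [Ring A] {a x y : A} {s t : ℤ}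
    (hx : a * x = s • (x * a)) (hy : a * y = t • (y * a)) :
    a * (x * y) = (s * t) • (x * y * a) := by
  rw [← mul_assoc, hx, smul_mul_assoc, mul_assoc, hy, mul_smul_comm, smul_smul, ← mul_assoc]

lemma mul_prod_four_of_anticommute {A : Type*} [Ring A] (x : Fin 4 → A)
    (hx : ∀ i j, i ≠ j → x i * x j = -(x j * x i)) (μ : Fin 4) :
    x μ * (x 0 * x 1 * x 2 * x 3) = -(x 0 * x 1 * x 2 * x 3 * x μ) := by
  have hsign : ∀ ν, x μ * x ν = (if ν = μ then 1 else -1 : ℤ) • (x ν * x μ) := by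
    intro ν
    split_ifs with h
    · rw [h, one_zsmul]
    · rw [hx μ ν (Ne.symm h), neg_one_zsmul]
  rw [mul_mul_eq_zsmul_of_mul_eq_zsmul (mul_mul_eq_zsmul_of_mul_eq_zsmul
    (mul_mul_eq_zsmul_of_mul_eq_zsmul (hsign 0) (hsign 1)) (hsign 2)) (hsign 3)]
  fin_cases μ <;> simp

lemma clifford_option_elim {K n ι : Type*} [CommRing K] [Fintype n] [DecidableEq n] [DecidableEq ι]
    {G : ι → Matrix n n K} {ε : ι → K}
    (hG : ∀ i j, G i * G j + G j * G i = (2 * if i = j then ε i else 0) • 1)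
    {C : Matrix n n K} (hC : C * C = 1) (hGC : ∀ i, G i * C + C * G i = 0) :
    ∀ o o' : Option ι, o.elim C G * o'.elim C G + o'.elim C G * o.elim C G =
      (2 * if o = o' then o.elim 1 ε else 0) • 1 := by
  rintro (_ | i) (_ | j)
  · simp [hC, two_smul]
  · simpa [add_comm] using hGC j
  · simpa using hGC i
  · simpa using hG i j

lemma sum_diagonal_contraction_four {R ι : Type*} [CommRing R] [Fintype ι] [DecidableEq ι]
    (ε : ι → R) (t : ι → ι → ι → ι → R) :
    ∑ a, ∑ b, ∑ c, ∑ d,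
        ((if a = b then ε a else 0) * (if c = d then ε c else 0)
          - (if a = c then ε a else 0) * (if b = d then ε b else 0)
          + (if a = d then ε a else 0) * (if b = c then ε b else 0)) * t a b c d =
      ∑ a, ∑ b, ε a * ε b * (t a a b b - t a b a b + t a b b a) := by
  simp only [sub_mul, add_mul, mul_sub, mul_add, Finset.sum_add_distrib,
    Finset.sum_sub_distrib, ite_mul, mul_ite, zero_mul, mul_zero, Finset.sum_ite_irrel,
    Finset.sum_const_zero, Finset.sum_ite_eq, Finset.mem_univ, if_true]

section EndTrace

variable {R M : Type*} [CommRing R] [AddCommGroup M] [Module R M]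

local notation "tr" => LinearMap.trace R M

lemma trace_mul_mul_mul_cycle (A B C D : Module.End R M) :
    tr (A * B * C * D) = tr (D * A * B * C) := by
  rw [LinearMap.trace_mul_comm, ← mul_assoc, ← mul_assoc]

lemma trace_commutator_mul_self (P Q : Module.End R M) :
    tr ((P * Q - Q * P) * (P * Q - Q * P)) = 2 * tr (P * Q * P * Q) - 2 * tr (P * P * Q * Q) := by
  simp only [mul_sub, sub_mul, map_sub, ← mul_assoc]
  rw [trace_mul_mul_mul_cycle Q P Q P, trace_mul_mul_mul_cycle Q P P Q,
    trace_mul_mul_mul_cycle Q Q P P, trace_mul_mul_mul_cycle P Q Q P]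
  ring

lemma trace_commutator_mul_self_swap (P Q : Module.End R M) :
    tr ((Q * P - P * Q) * (Q * P - P * Q)) = tr ((P * Q - Q * P) * (P * Q - Q * P)) := by
  rw [← neg_sub, neg_mul_neg]

lemma sum_option_elim_trace_commutator_mul_self {ι : Type*} [Fintype ι] (ε : ι → R)
    (T : ι → Module.End R M) (Φ : Module.End R M) :
    ∑ o : Option ι, ∑ o' : Option ι, o.elim 1 ε * o'.elim 1 ε *
      tr ((o.elim Φ T * o'.elim Φ T - o'.elim Φ T * o.elim Φ T) *
        (o.elim Φ T * o'.elim Φ T - o'.elim Φ T * o.elim Φ T)) =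
      ∑ a, ∑ b, ε a * ε b * tr ((T a * T b - T b * T a) * (T a * T b - T b * T a)) +
        2 * ∑ a, ε a * tr ((T a * Φ - Φ * T a) * (T a * Φ - Φ * T a)) := by
  simp only [Fintype.sum_option, Option.elim_none, Option.elim_some, sub_self, map_zero,
    mul_zero, one_mul, mul_one, trace_commutator_mul_self_swap _ Φ, Finset.sum_add_distrib]
  ring

end EndTrace

section DiracTrace

variable {k : ℕ} {ι V : Type*} [Fintype ι] [AddCommGroup V] [Module ℂ V]

lemma sum_matOp_pow_four (G : ι → Matrix (Fin k) (Fin k) ℂ) (T : ι → Module.End ℂ V) :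
    (∑ i, matOp (G i) (T i)) ^ 4 =
      ∑ a, ∑ b, ∑ c, ∑ d, matOp (G a * G b * G c * G d) (T a * T b * T c * T d) := by
  have hsq : (∑ i, matOp (G i) (T i)) ^ 2 = ∑ a, ∑ b, matOp (G a * G b) (T a * T b) := by
    simp only [sq, Finset.sum_mul_sum, matOp_mul]
  rw [show 4 = 2 * 2 from rfl, pow_mul, hsq, sq]
  simp only [Finset.sum_mul]
  simp only [Finset.mul_sum, matOp_mul, ← mul_assoc]

lemma trace_sum_matOp_pow_four [DecidableEq ι] [Module.Finite ℂ V]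
    (G : ι → Matrix (Fin k) (Fin k) ℂ) (ε : ι → ℂ)
    (hG : ∀ i j, G i * G j + G j * G i = (2 * if i = j then ε i else 0) • 1)
    (T : ι → Module.End ℂ V) :
    LinearMap.trace ℂ _ ((∑ i, matOp (G i) (T i)) ^ 4) =
      k * (LinearMap.trace ℂ V ((∑ i, ε i • (T i * T i)) * ∑ i, ε i • (T i * T i))
        - 1 / 2 * ∑ a, ∑ b, ε a * ε b *
          LinearMap.trace ℂ V ((T a * T b - T b * T a) * (T a * T b - T b * T a))) := by
  have hθ : LinearMap.trace ℂ V ((∑ i, ε i • (T i * T i)) * ∑ i, ε i • (T i * T i)) =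
      ∑ a, ∑ b, ε a * ε b * LinearMap.trace ℂ V (T a * T a * T b * T b) := by
    simp only [Finset.sum_mul_sum, map_sum, smul_mul_smul_comm, map_smul, smul_eq_mul, ← mul_assoc]
  rw [hθ, sum_matOp_pow_four]
  simp only [map_sum, trace_matOp, trace_mul_mul_mul_of_clifford hG, Fintype.card_fin,
    mul_assoc (G := ℂ)]
  rw [sum_diagonal_contraction_four]
  simp only [Finset.mul_sum, ← Finset.sum_sub_distrib]
  refine Finset.sum_congr rfl fun a _ => Finset.sum_congr rfl fun b _ => ?_
  rw [trace_commutator_mul_self, trace_mul_mul_mul_cycle (T a) (T b) (T b) (T a)]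
  ring

end DiracTrace

theorem stmt18_general (p q m : ℕ)
    (e : Fin 4 → ℂ)
    (γ : Fin 4 → Matrix (Fin 4) (Fin 4) ℂ)
    (hCl : ∀ μ ν, γ μ * γ ν + γ ν * γ μ =
      (2 * if μ = ν then e μ else 0) • (1 : Matrix (Fin 4) (Fin 4) ℂ))
    (γch : Matrix (Fin 4) (Fin 4) ℂ)
    (hγch : γch =
      ((-Complex.I) ^ ((((q : ℤ) - (p : ℤ)) * ((q : ℤ) - (p : ℤ) + 1)) / 2)) •
        (γ 0 * γ 1 * γ 2 * γ 3))
    (hγch2 : γch * γch = 1)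
    (dop : Fin 4 → Module.End ℂ (Matrix (Fin m) (Fin m) ℂ))
    (F : Fin 4 → Fin 4 → Module.End ℂ (Matrix (Fin m) (Fin m) ℂ))
    (hF : ∀ μ ν, F μ ν = dop μ * dop ν - dop ν * dop μ)
    (θ : Module.End ℂ (Matrix (Fin m) (Fin m) ℂ))
    (hθ : θ = ∑ μ, ∑ ν, (if μ = ν then e μ else 0) • (dop μ * dop ν))
    (Φ : Module.End ℂ (Matrix (Fin m) (Fin m) ℂ))
    (Dω : Module.End ℂ (Fin 4 → Matrix (Fin m) (Fin m) ℂ))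
    (hDω : Dω = (∑ μ, matOp (γ μ) (dop μ)) + matOp γch Φ) :
    (1 / 4 : ℂ) * LinearMap.trace ℂ (Fin 4 → Matrix (Fin m) (Fin m) ℂ) (Dω ^ 4) =
      -(1 / 2 : ℂ) * (∑ μ, ∑ ν, e μ * e ν *
          LinearMap.trace ℂ (Matrix (Fin m) (Fin m) ℂ) (F μ ν * F μ ν))
        + LinearMap.trace ℂ (Matrix (Fin m) (Fin m) ℂ) ((θ + Φ * Φ) * (θ + Φ * Φ))
        - ∑ μ, e μ * LinearMap.trace ℂ (Matrix (Fin m) (Fin m) ℂ)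
            ((dop μ * Φ - Φ * dop μ) * (dop μ * Φ - Φ * dop μ)) := by
  have hanti : ∀ μ ν, μ ≠ ν → γ μ * γ ν = -(γ ν * γ μ) := fun μ ν h =>
    eq_neg_of_add_eq_zero_left (by simpa [h] using hCl μ ν)
  have hγch_anti : ∀ μ, γ μ * γch + γch * γ μ = 0 := fun μ => by
    rw [hγch, mul_smul_comm, smul_mul_assoc, mul_prod_four_of_anticommute γ hanti μ, smul_neg,
      neg_add_cancel]
  have hD : Dω = ∑ o : Option (Fin 4), matOp (o.elim γch γ) (o.elim Φ dop) := by
    rw [hDω, Fintype.sum_option, add_comm]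
    rfl
  have hθΦ : ∑ o : Option (Fin 4), o.elim 1 e • (o.elim Φ dop * o.elim Φ dop) = θ + Φ * Φ := by
    simp [Fintype.sum_option, hθ, ite_smul, add_comm]
  rw [hD, trace_sum_matOp_pow_four _ _ (clifford_option_elim hCl hγch2 hγch_anti), hθΦ,
    sum_option_elim_trace_commutator_mul_self]
  simp only [hF]
  push_cast
  ring

theorem stmt18 (p q m : ℕ) (hpq : p + q = 4) (hm : 1 ≤ m)
    (e : Fin 4 → ℂ) (he : ∀ μ, e μ = if (μ : ℕ) < p then 1 else -1)
    (γ : Fin 4 → Matrix (Fin 4) (Fin 4) ℂ)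
    (hCl : ∀ μ ν, γ μ * γ ν + γ ν * γ μ =
      (2 * if μ = ν then e μ else 0) • (1 : Matrix (Fin 4) (Fin 4) ℂ))
    (hAdj : ∀ μ, (γ μ)ᴴ = e μ • γ μ)
    (γch : Matrix (Fin 4) (Fin 4) ℂ)
    (hγch : γch =
      ((-Complex.I) ^ ((((q : ℤ) - (p : ℤ)) * ((q : ℤ) - (p : ℤ) + 1)) / 2)) •
        (γ 0 * γ 1 * γ 2 * γ 3))
    (hγch2 : γch * γch = 1)
    (K A : Fin 4 → Matrix (Fin m) (Fin m) ℂ)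
    (dop : Fin 4 → Module.End ℂ (Matrix (Fin m) (Fin m) ℂ))
    (hdop : ∀ μ, dop μ = brkt (K μ + A μ) (e μ))
    (F : Fin 4 → Fin 4 → Module.End ℂ (Matrix (Fin m) (Fin m) ℂ))
    (hF : ∀ μ ν, F μ ν = dop μ * dop ν - dop ν * dop μ)
    (θ : Module.End ℂ (Matrix (Fin m) (Fin m) ℂ))
    (hθ : θ = ∑ μ, ∑ ν, (if μ = ν then e μ else 0) • (dop μ * dop ν))
    (Φ : Module.End ℂ (Matrix (Fin m) (Fin m) ℂ))
    (Dω : Module.End ℂ (Fin 4 → Matrix (Fin m) (Fin m) ℂ))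
    (hDω : Dω = (∑ μ, matOp (γ μ) (dop μ)) + matOp γch Φ) :
    (1 / 4 : ℂ) * LinearMap.trace ℂ (Fin 4 → Matrix (Fin m) (Fin m) ℂ) (Dω ^ 4) =
      -(1 / 2 : ℂ) * (∑ μ, ∑ ν, e μ * e ν *
          LinearMap.trace ℂ (Matrix (Fin m) (Fin m) ℂ) (F μ ν * F μ ν))
        + LinearMap.trace ℂ (Matrix (Fin m) (Fin m) ℂ) ((θ + Φ * Φ) * (θ + Φ * Φ))
        - ∑ μ, e μ * LinearMap.trace ℂ (Matrix (Fin m) (Fin m) ℂ)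
            ((dop μ * Φ - Φ * dop μ) * (dop μ * Φ - Φ * dop μ)) :=
  stmt18_general p q m e γ hCl γch hγch hγch2 dop F hF θ hθ Φ Dω hDω
end
end
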